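/- arXiv:2406.16249 — 2 statements merged into one kernel-verified Lean document; each statement's English description precedes it below -/
import Mathlib

section
/- Finite-horizon tight bound: with P, P̂ row-stochastic (possibly time-varying, P^t denoting the product of the first t transition matrices), every one-step row overlap at least 1 - ε_T/2, rewards in [0,1] with sup-distance at most ε_R, and horizon H, the undiscounted values V = ∑_{t=0}^{H-1} ⟨(P^t)_{s₀}, R_t⟩ and V̂ defined analogously satisfy |V - V̂| ≤ H - (1-ε_R)·(2/ε_T)·(1 - (1-ε_T/2)^H) for ε_T > 0, and more generally |V - V̂| ≤ ∑_{t=0}^{H-1} (1 + (ε_R - 1)(1-ε_T/2)^t). -/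
/-!
Couple the two chains step by step: if the rows of `P^t` and `P̂^t` at `s₀` overlap in mass
`o_t = ∑ min`, then on the common mass the rewards differ by at most `ε_R`, while the remaining
mass `1 - o_t` on each side contributes a value in `[0, 1 - o_t]`; hence
`|⟨(P^t)_{s₀}, R_t⟩ - ⟨(P̂^t)_{s₀}, R̂_t⟩| ≤ 1 + (ε_R - 1) o_t`. Overlaps multiply along
matrix products, so `o_t ≥ (1 - ε_T/2)^t`, and summing over `t < H` gives the bound, whose
closed form is a geometric sum.
-/

open Matrix Finset

section

variable {S : Type*} [Fintype S]

def overlap (p q : S → ℝ) : ℝ := ∑ s, min (p s) (q s)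

lemma row_mem_stdSimplex_of_mem_rowStochastic [DecidableEq S] {M : Matrix S S ℝ}
    (hM : M ∈ rowStochastic ℝ S) (i : S) : M i ∈ stdSimplex ℝ S :=
  ⟨fun _ => nonneg_of_mem_rowStochastic hM, sum_row_of_mem_rowStochastic hM i⟩

lemma list_prod_map_mem_rowStochastic [DecidableEq S] {P : ℕ → Matrix S S ℝ}
    (hP : ∀ t, P t ∈ rowStochastic ℝ S) (l : List ℕ) :
    (l.map P).prod ∈ rowStochastic ℝ S :=
  Submonoid.list_prod_mem _ (List.forall_mem_map.2 fun t _ => hP t)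

lemma mul_le_overlap_vecMul {p q : S → ℝ} {A B : Matrix S S ℝ} {c : ℝ}
    (hp : 0 ≤ p) (hq : 0 ≤ q) (hA : ∀ i j, 0 ≤ A i j) (hB : ∀ i j, 0 ≤ B i j)
    (hAB : ∀ i, c ≤ overlap (A i) (B i)) :
    overlap p q * c ≤ overlap (p ᵥ* A) (q ᵥ* B) :=
  calc overlap p q * c ≤ ∑ i, min (p i) (q i) * overlap (A i) (B i) := by
        rw [overlap, sum_mul]
        gcongr with i
        · exact le_min (hp i) (hq i)
        · exact hAB i
    _ = ∑ j, ∑ i, min (p i) (q i) * min (A i j) (B i j) := by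
        simp only [overlap, mul_sum]
        exact sum_comm
    _ ≤ overlap (p ᵥ* A) (q ᵥ* B) := by
        refine sum_le_sum fun j _ => le_min (sum_le_sum fun i _ => ?_) (sum_le_sum fun i _ => ?_)
        · exact mul_le_mul (min_le_left _ _) (min_le_left _ _) (le_min (hA i j) (hB i j)) (hp i)
        · exact mul_le_mul (min_le_right _ _) (min_le_right _ _) (le_min (hA i j) (hB i j)) (hq i)

lemma pow_le_overlap_list_prod_range [DecidableEq S] {P P' : ℕ → Matrix S S ℝ} {c : ℝ}
    (hc : 0 ≤ c) (hP : ∀ t, P t ∈ rowStochastic ℝ S) (hP' : ∀ t, P' t ∈ rowStochastic ℝ S)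
    (hover : ∀ t i, c ≤ overlap (P t i) (P' t i)) (s₀ : S) (t : ℕ) :
    c ^ t ≤ overlap (((List.range t).map P).prod s₀) (((List.range t).map P').prod s₀) := by
  induction t with
  | zero => simp [overlap, one_apply]
  | succ t ih =>
    rw [List.prod_range_succ, List.prod_range_succ, mul_apply_eq_vecMul, mul_apply_eq_vecMul,
      pow_succ]
    exact (mul_le_mul_of_nonneg_right ih hc).trans <| mul_le_overlap_vecMul
      (fun _ => nonneg_of_mem_rowStochastic (list_prod_map_mem_rowStochastic hP _))
      (fun _ => nonneg_of_mem_rowStochastic (list_prod_map_mem_rowStochastic hP' _))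
      (fun _ _ => nonneg_of_mem_rowStochastic (hP t))
      (fun _ _ => nonneg_of_mem_rowStochastic (hP' t)) (hover t)

lemma dotProduct_mem_Icc_of_mem_Icc {w r : S → ℝ} (hw : 0 ≤ w)
    (hr : ∀ s, r s ∈ Set.Icc (0 : ℝ) 1) : w ⬝ᵥ r ∈ Set.Icc 0 (∑ s, w s) := by
  refine ⟨dotProduct_nonneg_of_nonneg hw fun s => (hr s).1, ?_⟩
  exact (dotProduct_le_dotProduct_of_nonneg_left (v := 1) (fun s => (hr s).2) hw).trans_eq
    (dotProduct_one w)

lemma abs_dotProduct_le_mul_sum {w d : S → ℝ} {ε : ℝ} (hw : 0 ≤ w) (hd : ∀ s, |d s| ≤ ε) :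
    |w ⬝ᵥ d| ≤ ε * ∑ s, w s :=
  calc |w ⬝ᵥ d| ≤ ∑ s, |w s * d s| := abs_sum_le_sum_abs _ _
    _ ≤ ∑ s, w s * ε := by
        gcongr with s
        rw [abs_mul, abs_of_nonneg (hw s)]
        exact mul_le_mul_of_nonneg_left (hd s) (hw s)
    _ = ε * ∑ s, w s := by rw [← sum_mul, mul_comm]

lemma abs_dotProduct_sub_le_one_add_mul_overlap {p q r r' : S → ℝ} {ε : ℝ}
    (hp : p ∈ stdSimplex ℝ S) (hq : q ∈ stdSimplex ℝ S) (hr : ∀ s, r s ∈ Set.Icc (0 : ℝ) 1)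
    (hr' : ∀ s, r' s ∈ Set.Icc (0 : ℝ) 1) (hrr' : ∀ s, |r s - r' s| ≤ ε) :
    |p ⬝ᵥ r - q ⬝ᵥ r'| ≤ 1 + (ε - 1) * overlap p q := by
  set m : S → ℝ := fun s => min (p s) (q s)
  have hsplit : p ⬝ᵥ r - q ⬝ᵥ r' = m ⬝ᵥ (r - r') + ((p - m) ⬝ᵥ r - (q - m) ⬝ᵥ r') := by
    simp only [sub_dotProduct, dotProduct_sub]
    ring
  have hcommon : |m ⬝ᵥ (r - r')| ≤ ε * overlap p q :=
    abs_dotProduct_le_mul_sum (fun s => le_min (hp.1 s) (hq.1 s)) hrr'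
  have hp_rest : (p - m) ⬝ᵥ r ∈ Set.Icc 0 (1 - overlap p q) := by
    have := dotProduct_mem_Icc_of_mem_Icc (w := p - m)
      (fun s => sub_nonneg.2 (min_le_left _ _)) hr
    simp only [Pi.sub_apply, sum_sub_distrib, hp.2] at this
    exact this
  have hq_rest : (q - m) ⬝ᵥ r' ∈ Set.Icc 0 (1 - overlap p q) := by
    have := dotProduct_mem_Icc_of_mem_Icc (w := q - m)
      (fun s => sub_nonneg.2 (min_le_right _ _)) hr'
    simp only [Pi.sub_apply, sum_sub_distrib, hq.2] at this
    exact this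
  rw [hsplit, abs_le]
  have := abs_le.1 hcommon
  constructor <;> linarith [hp_rest.1, hp_rest.2, hq_rest.1, hq_rest.2]

end

lemma sum_range_one_add_mul_pow_eq {ε a : ℝ} (hε : ε ≠ 0) (H : ℕ) :
    ∑ t ∈ range H, (1 + (a - 1) * (1 - ε / 2) ^ t) =
      H - (1 - a) * (2 / ε) * (1 - (1 - ε / 2) ^ H) := by
  have hratio : (1 - ε / 2 : ℝ) ≠ 1 := by simpa using hε
  rw [sum_add_distrib, ← mul_sum, geom_sum_eq hratio, sum_const, card_range, nsmul_one,
    show (1 - ε / 2 - 1 : ℝ) = -(ε / 2) by ring]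
  field_simp
  ring

theorem finite_horizon_tight_bound_general {S : Type*} [Fintype S] [DecidableEq S]
    (H : ℕ) (P Phat : ℕ → Matrix S S ℝ) (R Rhat : ℕ → S → ℝ) (εT εR : ℝ)
    (hεT2 : εT ≤ 2) (hεR1 : εR ≤ 1)
    (hP : ∀ t s s', 0 ≤ P t s s') (hProw : ∀ t s, ∑ s', P t s s' = 1)
    (hPhat : ∀ t s s', 0 ≤ Phat t s s') (hPhatrow : ∀ t s, ∑ s', Phat t s s' = 1)
    (hover : ∀ t s, 1 - εT / 2 ≤ ∑ s', min (P t s s') (Phat t s s'))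
    (hR : ∀ t s, R t s ∈ Set.Icc (0 : ℝ) 1) (hRhat : ∀ t s, Rhat t s ∈ Set.Icc (0 : ℝ) 1)
    (hRdiff : ∀ t s, |R t s - Rhat t s| ≤ εR)
    (s₀ : S) :
    |(∑ t ∈ Finset.range H, ∑ s', (((List.range t).map P).prod) s₀ s' * R t s') -
        ∑ t ∈ Finset.range H, ∑ s', (((List.range t).map Phat).prod) s₀ s' * Rhat t s'| ≤
      ∑ t ∈ Finset.range H, (1 + (εR - 1) * (1 - εT / 2) ^ t) ∧
    (0 < εT →
      |(∑ t ∈ Finset.range H, ∑ s', (((List.range t).map P).prod) s₀ s' * R t s') -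
          ∑ t ∈ Finset.range H, ∑ s', (((List.range t).map Phat).prod) s₀ s' * Rhat t s'| ≤
        H - (1 - εR) * (2 / εT) * (1 - (1 - εT / 2) ^ H)) := by
  have hPs : ∀ t, P t ∈ rowStochastic ℝ S := fun t => mem_rowStochastic_iff_sum.2 ⟨hP t, hProw t⟩
  have hPhats : ∀ t, Phat t ∈ rowStochastic ℝ S :=
    fun t => mem_rowStochastic_iff_sum.2 ⟨hPhat t, hPhatrow t⟩
  have hstep : ∀ t, |(∑ s', (((List.range t).map P).prod) s₀ s' * R t s') -
      ∑ s', (((List.range t).map Phat).prod) s₀ s' * Rhat t s'| ≤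
        1 + (εR - 1) * (1 - εT / 2) ^ t := by
    intro t
    have hmass := pow_le_overlap_list_prod_range (c := 1 - εT / 2) (by linarith) hPs hPhats
      hover s₀ t
    refine (abs_dotProduct_sub_le_one_add_mul_overlap
      (row_mem_stdSimplex_of_mem_rowStochastic (list_prod_map_mem_rowStochastic hPs _) s₀)
      (row_mem_stdSimplex_of_mem_rowStochastic (list_prod_map_mem_rowStochastic hPhats _) s₀)
      (hR t) (hRhat t) (hRdiff t)).trans ?_
    nlinarith
  have hbound := (abs_sum_le_sum_abs _ _).trans (sum_le_sum fun t (_ : t ∈ range H) => hstep t)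
  rw [sum_sub_distrib] at hbound
  exact ⟨hbound, fun hεT => sum_range_one_add_mul_pow_eq hεT.ne' H ▸ hbound⟩

/-- Finite-horizon tight bound, with time-varying transitions and rewards. -/
theorem finite_horizon_tight_bound {S : Type*} [Fintype S] [DecidableEq S]
    (H : ℕ) (P Phat : ℕ → Matrix S S ℝ) (R Rhat : ℕ → S → ℝ) (εT εR : ℝ)
    (hεT0 : 0 ≤ εT) (hεT2 : εT ≤ 2) (hεR0 : 0 ≤ εR) (hεR1 : εR ≤ 1)
    (hP : ∀ t s s', 0 ≤ P t s s') (hProw : ∀ t s, ∑ s', P t s s' = 1)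
    (hPhat : ∀ t s s', 0 ≤ Phat t s s') (hPhatrow : ∀ t s, ∑ s', Phat t s s' = 1)
    (hover : ∀ t s, 1 - εT / 2 ≤ ∑ s', min (P t s s') (Phat t s s'))
    (hR : ∀ t s, R t s ∈ Set.Icc (0 : ℝ) 1) (hRhat : ∀ t s, Rhat t s ∈ Set.Icc (0 : ℝ) 1)
    (hRdiff : ∀ t s, |R t s - Rhat t s| ≤ εR)
    (s₀ : S) :
    |(∑ t ∈ Finset.range H, ∑ s', (((List.range t).map P).prod) s₀ s' * R t s') -
        ∑ t ∈ Finset.range H, ∑ s', (((List.range t).map Phat).prod) s₀ s' * Rhat t s'| ≤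
      ∑ t ∈ Finset.range H, (1 + (εR - 1) * (1 - εT / 2) ^ t) ∧
    (0 < εT →
      |(∑ t ∈ Finset.range H, ∑ s', (((List.range t).map P).prod) s₀ s' * R t s') -
          ∑ t ∈ Finset.range H, ∑ s', (((List.range t).map Phat).prod) s₀ s' * Rhat t s'| ≤
        H - (1 - εR) * (2 / εT) * (1 - (1 - εT / 2) ^ H)) :=
  finite_horizon_tight_bound_general H P Phat R Rhat εT εR hεT2 hεR1 hP hProw hPhat hPhatrow hover
    hR hRhat hRdiff s₀
end

section
/- Finite-horizon classical bound: under the hypotheses that ‖(P_t)_s - (P̂_t)_s‖₁ ≤ ε_T and ‖R_t - R̂_t‖_∞ ≤ ε_R for all s and t < H, with rewards in [0,1], the undiscounted H-step values satisfy |V_{0,s} - V̂_{0,s}| ≤ ε_R·H + ε_T·H(H-1)/4 for every state s. -/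
/-!
Backward induction on the horizon. The values are confined to `[0, H - h]`, so after
centring them at `(H - h) / 2` (free, since both transition rows have mass one) the
transition error at step `h` costs at most `εT (H - h - 1) / 2`, the reward error costs `εR`,
and the error already accumulated at `h + 1` is carried along by the averaging with `P̂_h`.
Summing `εR + εT k / 2` over `k < H` gives `εR H + εT H (H - 1) / 4`.
-/

open Finset

structure IsFiniteHorizonValue {S : Type*} [Fintype S] (H : ℕ) (P : ℕ → Matrix S S ℝ)
    (R V : ℕ → S → ℝ) : Prop where
  terminal : ∀ s, V H s = 0
  bellman : ∀ h < H, ∀ s, V h s = R h s + ∑ s', P h s s' * V (h + 1) s'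

section Averages

variable {S : Type*} [Fintype S]

lemma abs_sum_mul_le_of_sum_eq_one {q x : S → ℝ} {c : ℝ} (hq : ∀ s, 0 ≤ q s)
    (hq1 : ∑ s, q s = 1) (hx : ∀ s, |x s| ≤ c) : |∑ s, q s * x s| ≤ c :=
  calc |∑ s, q s * x s| ≤ ∑ s, |q s * x s| := abs_sum_le_sum_abs _ _
    _ = ∑ s, q s * |x s| := by simp only [abs_mul, abs_of_nonneg (hq _)]
    _ ≤ ∑ s, q s * c := sum_le_sum fun s _ => mul_le_mul_of_nonneg_left (hx s) (hq s)
    _ = c := by rw [← sum_mul, hq1, one_mul]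

lemma mem_Icc_of_sum_eq_one {q x : S → ℝ} {a b : ℝ} (hq : ∀ s, 0 ≤ q s)
    (hq1 : ∑ s, q s = 1) (hx : ∀ s, x s ∈ Set.Icc a b) : ∑ s, q s * x s ∈ Set.Icc a b := by
  have hsum (c : ℝ) : ∑ s, q s * c = c := by rw [← sum_mul, hq1, one_mul]
  constructor
  · calc a = ∑ s, q s * a := (hsum a).symm
      _ ≤ ∑ s, q s * x s := sum_le_sum fun s _ => mul_le_mul_of_nonneg_left (hx s).1 (hq s)
  · calc ∑ s, q s * x s ≤ ∑ s, q s * b :=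
          sum_le_sum fun s _ => mul_le_mul_of_nonneg_left (hx s).2 (hq s)
      _ = b := hsum b

lemma abs_sum_sub_mul_le_of_sum_eq {p q v : S → ℝ} {a b : ℝ} (hpq : ∑ s, p s = ∑ s, q s)
    (hv : ∀ s, v s ∈ Set.Icc a b) :
    |∑ s, (p s - q s) * v s| ≤ (∑ s, |p s - q s|) * ((b - a) / 2) := by
  set m := (a + b) / 2 with hm
  have hcentre : ∑ s, (p s - q s) * v s = ∑ s, (p s - q s) * (v s - m) := by
    simp only [mul_sub, sum_sub_distrib, ← sum_mul, hpq, sub_self, zero_mul, sub_zero]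
  have hdev (s : S) : |v s - m| ≤ (b - a) / 2 := by
    rw [abs_le]; constructor <;> linarith [(hv s).1, (hv s).2, hm]
  calc |∑ s, (p s - q s) * v s| = |∑ s, (p s - q s) * (v s - m)| := by rw [hcentre]
    _ ≤ ∑ s, |(p s - q s) * (v s - m)| := abs_sum_le_sum_abs _ _
    _ = ∑ s, |p s - q s| * |v s - m| := by simp only [abs_mul]
    _ ≤ ∑ s, |p s - q s| * ((b - a) / 2) :=
      sum_le_sum fun s _ => mul_le_mul_of_nonneg_left (hdev s) (abs_nonneg _)
    _ = (∑ s, |p s - q s|) * ((b - a) / 2) := by rw [sum_mul]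

lemma abs_bellman_sub_le {p q v w : S → ℝ} {r r' d c : ℝ} (hp1 : ∑ s, p s = 1)
    (hq : ∀ s, 0 ≤ q s) (hq1 : ∑ s, q s = 1) (hv : ∀ s, v s ∈ Set.Icc 0 d)
    (hvw : ∀ s, |v s - w s| ≤ c) :
    |(r + ∑ s, p s * v s) - (r' + ∑ s, q s * w s)|
      ≤ |r - r'| + (∑ s, |p s - q s|) * (d / 2) + c := by
  have hsplit : (r + ∑ s, p s * v s) - (r' + ∑ s, q s * w s)
      = (r - r') + ∑ s, (p s - q s) * v s + ∑ s, q s * (v s - w s) := by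
    simp only [sub_mul, mul_sub, sum_sub_distrib]; ring
  have htransition := abs_sum_sub_mul_le_of_sum_eq (hp1.trans hq1.symm) hv
  have hcarry := abs_sum_mul_le_of_sum_eq_one hq hq1 hvw
  rw [sub_zero] at htransition
  calc |(r + ∑ s, p s * v s) - (r' + ∑ s, q s * w s)|
      ≤ |r - r' + ∑ s, (p s - q s) * v s| + |∑ s, q s * (v s - w s)| := by
        rw [hsplit]; exact abs_add_le _ _
    _ ≤ |r - r'| + |∑ s, (p s - q s) * v s| + |∑ s, q s * (v s - w s)| := by
        gcongr; exact abs_add_le _ _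
    _ ≤ |r - r'| + (∑ s, |p s - q s|) * (d / 2) + c := by gcongr

end Averages

section FiniteHorizon

variable {S : Type*} [Fintype S] {H : ℕ} {P Phat : ℕ → Matrix S S ℝ} {R Rhat V Vhat : ℕ → S → ℝ}

lemma IsFiniteHorizonValue.mem_Icc (hV : IsFiniteHorizonValue H P R V)
    (hP : ∀ t s s', 0 ≤ P t s s') (hProw : ∀ t s, ∑ s', P t s s' = 1)
    (hR : ∀ t s, R t s ∈ Set.Icc (0 : ℝ) 1) {h : ℕ} (hh : h ≤ H) (s : S) :
    V h s ∈ Set.Icc 0 ((H : ℝ) - h) := by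
  induction hh using Nat.decreasingInduction generalizing s with
  | self => simp [hV.terminal s]
  | of_succ k hk ih =>
    have hnext := mem_Icc_of_sum_eq_one (hP k s) (hProw k s) ih
    rw [hV.bellman k hk s]
    push_cast at hnext
    constructor <;> linarith [(hR k s).1, (hR k s).2, hnext.1, hnext.2]

lemma IsFiniteHorizonValue.abs_sub_le (hV : IsFiniteHorizonValue H P R V)
    (hVhat : IsFiniteHorizonValue H Phat Rhat Vhat)
    (hP : ∀ t s s', 0 ≤ P t s s') (hProw : ∀ t s, ∑ s', P t s s' = 1)
    (hPhat : ∀ t s s', 0 ≤ Phat t s s') (hPhatrow : ∀ t s, ∑ s', Phat t s s' = 1)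
    (hR : ∀ t s, R t s ∈ Set.Icc (0 : ℝ) 1) {εT εR : ℝ}
    (hTdiff : ∀ t < H, ∀ s, ∑ s', |P t s s' - Phat t s s'| ≤ εT)
    (hRdiff : ∀ t < H, ∀ s, |R t s - Rhat t s| ≤ εR) {h : ℕ} (hh : h ≤ H) (s : S) :
    |V h s - Vhat h s| ≤ εR * (H - h) + εT * ((H - h) * (H - h - 1)) / 4 := by
  induction hh using Nat.decreasingInduction generalizing s with
  | self => simp [hV.terminal s, hVhat.terminal s]
  | of_succ k hk ih =>
    have hstep := abs_bellman_sub_le (r := R k s) (r' := Rhat k s) (hProw k s) (hPhat k s)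
      (hPhatrow k s) (hV.mem_Icc hP hProw hR hk) ih
    have hrange : (0 : ℝ) ≤ (H - (k + 1 : ℕ)) / 2 := by
      have : ((k + 1 : ℕ) : ℝ) ≤ H := by exact_mod_cast hk
      linarith
    have htransition := mul_le_mul_of_nonneg_right (hTdiff k hk s) hrange
    rw [hV.bellman k hk s, hVhat.bellman k hk s]
    push_cast at hstep htransition ⊢
    linarith [hRdiff k hk s]

end FiniteHorizon

theorem finite_horizon_classical_bound_general {S : Type*} [Fintype S]
    (H : ℕ) (P Phat : ℕ → Matrix S S ℝ) (R Rhat : ℕ → S → ℝ) (εT εR : ℝ)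
    (hP : ∀ t s s', 0 ≤ P t s s') (hProw : ∀ t s, ∑ s', P t s s' = 1)
    (hPhat : ∀ t s s', 0 ≤ Phat t s s') (hPhatrow : ∀ t s, ∑ s', Phat t s s' = 1)
    (hTdiff : ∀ t, t < H → ∀ s, ∑ s', |P t s s' - Phat t s s'| ≤ εT)
    (hR : ∀ t s, R t s ∈ Set.Icc (0 : ℝ) 1)
    (hRdiff : ∀ t, t < H → ∀ s, |R t s - Rhat t s| ≤ εR)
    (V Vhat : ℕ → S → ℝ)
    (hVH : ∀ s, V H s = 0) (hVhatH : ∀ s, Vhat H s = 0)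
    (hVrec : ∀ h, h < H → ∀ s, V h s = R h s + ∑ s', P h s s' * V (h + 1) s')
    (hVhatrec : ∀ h, h < H → ∀ s, Vhat h s = Rhat h s + ∑ s', Phat h s s' * Vhat (h + 1) s') :
    ∀ s, |V 0 s - Vhat 0 s| ≤ εR * H + εT * (H * (H - 1 : ℝ)) / 4 := by
  intro s
  have hbound := IsFiniteHorizonValue.abs_sub_le ⟨hVH, hVrec⟩ ⟨hVhatH, hVhatrec⟩
    hP hProw hPhat hPhatrow hR hTdiff hRdiff (Nat.zero_le H) s
  simpa using hbound

/-- Finite-horizon classical bound via backward recursion. -/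
theorem finite_horizon_classical_bound {S : Type*} [Fintype S] [DecidableEq S]
    (H : ℕ) (P Phat : ℕ → Matrix S S ℝ) (R Rhat : ℕ → S → ℝ) (εT εR : ℝ)
    (hεT0 : 0 ≤ εT) (hεR0 : 0 ≤ εR)
    (hP : ∀ t s s', 0 ≤ P t s s') (hProw : ∀ t s, ∑ s', P t s s' = 1)
    (hPhat : ∀ t s s', 0 ≤ Phat t s s') (hPhatrow : ∀ t s, ∑ s', Phat t s s' = 1)
    (hTdiff : ∀ t, t < H → ∀ s, ∑ s', |P t s s' - Phat t s s'| ≤ εT)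
    (hR : ∀ t s, R t s ∈ Set.Icc (0 : ℝ) 1) (hRhat : ∀ t s, Rhat t s ∈ Set.Icc (0 : ℝ) 1)
    (hRdiff : ∀ t, t < H → ∀ s, |R t s - Rhat t s| ≤ εR)
    (V Vhat : ℕ → S → ℝ)
    (hVH : ∀ s, V H s = 0) (hVhatH : ∀ s, Vhat H s = 0)
    (hVrec : ∀ h, h < H → ∀ s, V h s = R h s + ∑ s', P h s s' * V (h + 1) s')
    (hVhatrec : ∀ h, h < H → ∀ s, Vhat h s = Rhat h s + ∑ s', Phat h s s' * Vhat (h + 1) s') :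
    ∀ s, |V 0 s - Vhat 0 s| ≤ εR * H + εT * (H * (H - 1 : ℝ)) / 4 :=
  finite_horizon_classical_bound_general H P Phat R Rhat εT εR hP hProw hPhat hPhatrow hTdiff hR
    hRdiff V Vhat hVH hVhatH hVrec hVhatrec
end
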